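/- arXiv:2308.06563 — 3 statements merged into one kernel-verified Lean document; each statement's English description precedes it below -/
import Mathlib

section
/- For n ≥ 2, (s_{n-1} - 1)(2s_{n-1} - 3) > 2^(2^(n-1)), where s_k is the Sylvester sequence. -/
/-!
Since `sₖ₊₁ - 1 = sₖ (sₖ - 1) ≥ (sₖ - 1)²` and `s₁ - 1 = 2`, induction gives `sₖ₊₁ - 1 ≥ 2 ^ 2 ^ k`.
With `a = sₙ₋₁ - 1` the left-hand side is `a (2a - 1) > a² ≥ (2 ^ 2 ^ (n-2))² = 2 ^ 2 ^ (n-1)`.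
-/

def sylvester : ℕ → ℕ
  | 0 => 2
  | n + 1 => sylvester n * (sylvester n - 1) + 1

theorem sylvester_succ_sub_one (n : ℕ) :
    sylvester (n + 1) - 1 = sylvester n * (sylvester n - 1) :=
  Nat.add_sub_cancel _ _

theorem two_pow_two_pow_le_sylvester_succ_sub_one (n : ℕ) :
    2 ^ 2 ^ n ≤ sylvester (n + 1) - 1 := by
  induction n with
  | zero => exact le_rfl
  | succ k ih =>
    calc 2 ^ 2 ^ (k + 1) = (2 ^ 2 ^ k) ^ 2 := by rw [pow_succ, pow_mul]
      _ ≤ (sylvester (k + 1) - 1) ^ 2 := Nat.pow_le_pow_left ih 2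
      _ ≤ sylvester (k + 1) * (sylvester (k + 1) - 1) := by
        rw [sq]
        exact Nat.mul_le_mul_right _ (Nat.sub_le _ _)
      _ = sylvester (k + 2) - 1 := (sylvester_succ_sub_one _).symm

theorem sq_lt_mul_two_mul_sub_one {a : ℕ} (ha : 2 ≤ a) : a ^ 2 < a * (2 * a - 1) := by
  rw [sq]
  exact Nat.mul_lt_mul_of_pos_left (by omega) (by omega)

theorem canonical_index_gt_doubly_exponential (n : ℕ) (hn : 2 ≤ n) :
    (sylvester (n - 1) - 1) * (2 * sylvester (n - 1) - 3) > 2 ^ (2 ^ (n - 1)) := by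
  obtain ⟨m, rfl⟩ : ∃ m, n = m + 2 := ⟨n - 2, by omega⟩
  have hlb := two_pow_two_pow_le_sylvester_succ_sub_one m
  have ha : 2 ≤ sylvester (m + 1) - 1 := le_trans (Nat.one_lt_two_pow (by positivity)) hlb
  have hfactor : 2 * sylvester (m + 1) - 3 = 2 * (sylvester (m + 1) - 1) - 1 := by omega
  show 2 ^ 2 ^ (m + 1) < (sylvester (m + 1) - 1) * (2 * sylvester (m + 1) - 3)
  calc 2 ^ 2 ^ (m + 1) = (2 ^ 2 ^ m) ^ 2 := by rw [pow_succ, pow_mul]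
    _ ≤ (sylvester (m + 1) - 1) ^ 2 := Nat.pow_le_pow_left hlb 2
    _ < (sylvester (m + 1) - 1) * (2 * sylvester (m + 1) - 3) := by
      rw [hfactor]
      exact sq_lt_mul_two_mul_sub_one ha
end

section
/- For n ≥ 3, let s_k denote the Sylvester sequence and set a_0 = (s_{n-1}-1)/2 - 1, a_1 = (s_{n-1}-1)/2, a_i = (s_{n-1}-1)(s_{n-1}-2)/(2 s_{n-i}) for 2 ≤ i ≤ n-1, and a_n = ((s_{n-1}-1)(s_{n-1}-2)/2 - 1)/2. Then all a_i are positive integers. -/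
/-!
Every term of Sylvester's sequence is one more than the product of the previous terms, so
`s - 1 = s_0 s_1 ⋯ s_{n-2}` for `s = s_{n-1}`. Since `s_0 = 2` and all later terms are odd, `s - 1`
is twice the odd number `m = s_1 ⋯ s_{n-2}`, and each `2 s_{n-i}` with `2 ≤ i ≤ n - 1` divides
`s - 1`. Hence `(s - 1)(s - 2) / 2 = m (s - 2)` is a product of two odd numbers, so one less than
it is even. Positivity follows from `s ≥ s_2 = 7`.
-/

open Finset

lemma two_le_sylvester (k : ℕ) : 2 ≤ sylvester k := by
  induction k with
  | zero => rfl
  | succ k ih =>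
    have : 1 ≤ sylvester k - 1 := by omega
    have := Nat.mul_le_mul ih this
    simp only [sylvester]
    omega

lemma sylvester_strictMono : StrictMono sylvester := by
  refine strictMono_nat_of_lt_succ fun k => ?_
  have : 1 ≤ sylvester k - 1 := by have := two_le_sylvester k; omega
  have := Nat.le_mul_of_pos_right (sylvester k) this
  simp only [sylvester]
  omega

lemma sylvester_sub_one_eq_prod (n : ℕ) :
    sylvester n - 1 = ∏ k ∈ range n, sylvester k := by
  induction n with
  | zero => rfl
  | succ n ih =>
    rw [prod_range_succ, ← ih, sylvester, Nat.add_sub_cancel, mul_comm]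

lemma odd_sylvester {k : ℕ} (hk : k ≠ 0) : Odd (sylvester k) := by
  obtain ⟨k, rfl⟩ := Nat.exists_eq_succ_of_ne_zero hk
  rw [sylvester]
  exact (Nat.even_mul_pred_self _).add_one

lemma two_mul_sylvester_dvd_sylvester_sub_one {k n : ℕ} (hk : k ≠ 0) (hkn : k < n) :
    2 * sylvester k ∣ sylvester n - 1 := by
  have hsub : ({0, k} : Finset ℕ) ⊆ range n := by
    simp only [insert_subset_iff, singleton_subset_iff, mem_range]
    omega
  have := prod_dvd_prod_of_subset _ _ sylvester hsub
  rwa [prod_pair hk.symm, ← sylvester_sub_one_eq_prod] at this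

lemma sylvester_sub_one_eq_two_mul_odd {n : ℕ} (hn : n ≠ 0) :
    ∃ m, Odd m ∧ sylvester n - 1 = 2 * m := by
  obtain ⟨n, rfl⟩ := Nat.exists_eq_succ_of_ne_zero hn
  refine ⟨∏ k ∈ range n, sylvester (k + 1), ?_, ?_⟩
  · exact prod_induction _ Odd (fun _ _ => Odd.mul) odd_one
      fun k _ => odd_sylvester k.succ_ne_zero
  · rw [sylvester_sub_one_eq_prod, prod_range_succ', mul_comm]
    rfl

theorem terminal_weights_are_positive_integers (n : ℕ) (hn : 3 ≤ n) :
    2 ∣ (sylvester (n - 1) - 1) ∧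
    (∀ i, 2 ≤ i → i ≤ n - 1 →
      2 * sylvester (n - i) ∣ (sylvester (n - 1) - 1) * (sylvester (n - 1) - 2)) ∧
    2 ∣ ((sylvester (n - 1) - 1) * (sylvester (n - 1) - 2) / 2 - 1) ∧
    0 < (sylvester (n - 1) - 1) / 2 - 1 ∧
    0 < (sylvester (n - 1) - 1) / 2 ∧
    (∀ i, 2 ≤ i → i ≤ n - 1 →
      0 < (sylvester (n - 1) - 1) * (sylvester (n - 1) - 2) / (2 * sylvester (n - i))) ∧
    0 < ((sylvester (n - 1) - 1) * (sylvester (n - 1) - 2) / 2 - 1) / 2 := by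
  set s := sylvester (n - 1)
  have hs7 : 7 ≤ s := sylvester_strictMono.monotone (show 2 ≤ n - 1 by omega)
  obtain ⟨m, hm_odd, hm⟩ := sylvester_sub_one_eq_two_mul_odd (show n - 1 ≠ 0 by omega)
  have hs_odd : Odd s := odd_sylvester (by omega)
  have hm3 : 3 ≤ m := by obtain ⟨j, rfl⟩ := hm_odd; omega
  have hhalf_prod : (s - 1) * (s - 2) / 2 = m * (s - 2) := by
    rw [hm, mul_assoc, Nat.mul_div_cancel_left _ two_pos]
  have hweight_dvd (i : ℕ) (hi : 2 ≤ i) (hin : i ≤ n - 1) :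
      2 * sylvester (n - i) ∣ (s - 1) * (s - 2) :=
    (two_mul_sylvester_dvd_sylvester_sub_one (by omega) (by omega)).mul_right _
  have hprod_odd : Odd (m * (s - 2)) :=
    hm_odd.mul (Nat.Odd.sub_even (by omega) hs_odd even_two)
  refine ⟨⟨m, hm⟩, hweight_dvd, ?_, by omega, by omega, fun i hi hin => ?_, ?_⟩
  · rw [hhalf_prod]
    exact even_iff_two_dvd.mp (Nat.Odd.sub_odd hprod_odd odd_one)
  · exact Nat.div_pos (Nat.le_of_dvd (Nat.mul_pos (by omega) (by omega)) (hweight_dvd i hi hin))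
      (by have := two_le_sylvester (n - i); omega)
  · have : 3 * 5 ≤ m * (s - 2) := Nat.mul_le_mul hm3 (by omega)
    omega
end

section
/- For n ≥ 1, with h = s_n - 1, a_i = h/s_{n-i} for 1 ≤ i ≤ n, and a_0 = 1 (Sylvester sequence s_k), one has a_0 + a_1 + ... + a_n = h, and every a_i divides h. -/
open Finset

theorem Finset.sum_Icc_one_sub_eq_sum_range {M : Type*} [AddCommMonoid M] (f : ℕ → M) (n : ℕ) :
    ∑ i ∈ Icc 1 n, f (n - i) = ∑ k ∈ range n, f k := by
  rw [← Ico_add_one_right_eq_Icc, sum_Ico_reflect f 1 le_rfl, Nat.sub_self, Nat.add_sub_cancel,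
    Nat.Ico_zero_eq_range]

namespace sylvester

theorem two_le (n : ℕ) : 2 ≤ sylvester n := by
  induction n with
  | zero => rfl
  | succ n ih =>
    have : 2 * 1 ≤ sylvester n * (sylvester n - 1) := Nat.mul_le_mul ih (by omega)
    simp only [sylvester]
    omega

theorem succ_sub_one (n : ℕ) : sylvester (n + 1) - 1 = sylvester n * (sylvester n - 1) := rfl

theorem sub_one_eq_prod (n : ℕ) : sylvester n - 1 = ∏ k ∈ range n, sylvester k := by
  induction n with
  | zero => rfl
  | succ n ih => rw [succ_sub_one, prod_range_succ, ih, mul_comm]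

theorem dvd_sub_one {k n : ℕ} (h : k < n) : sylvester k ∣ sylvester n - 1 := by
  rw [sub_one_eq_prod]
  exact dvd_prod_of_mem _ (mem_range.mpr h)

theorem sub_one_div_succ {k n : ℕ} (h : k < n) :
    (sylvester (n + 1) - 1) / sylvester k = sylvester n * ((sylvester n - 1) / sylvester k) := by
  rw [succ_sub_one, Nat.mul_div_assoc _ (dvd_sub_one h)]

theorem sum_sub_one_div_add_one (n : ℕ) :
    ∑ k ∈ range n, (sylvester n - 1) / sylvester k + 1 = sylvester n - 1 := by
  induction n with
  | zero => rfl
  | succ n ih =>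
    obtain ⟨t, ht⟩ : ∃ t, sylvester n = t + 2 := ⟨sylvester n - 2, by have := two_le n; omega⟩
    have hlast : (sylvester (n + 1) - 1) / sylvester n = sylvester n - 1 := by
      rw [succ_sub_one, Nat.mul_div_cancel_left _ (by omega)]
    have hsum : ∑ k ∈ range n, (sylvester n - 1) / sylvester k = t := by omega
    rw [sum_range_succ, hlast, sum_congr rfl fun k hk => sub_one_div_succ (mem_range.mp hk),
      ← mul_sum, hsum, succ_sub_one, ht, show t + 2 - 1 = t + 1 from rfl]
    ring

end sylvester

theorem gorenstein_canonical_weights_general (n : ℕ) :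
    1 + (∑ i ∈ Finset.Icc 1 n, (sylvester n - 1) / sylvester (n - i)) = sylvester n - 1
    ∧ ∀ i ∈ Finset.Icc 1 n, (sylvester n - 1) / sylvester (n - i) ∣ sylvester n - 1 := by
  refine ⟨?_, fun i hi => ?_⟩
  · rw [sum_Icc_one_sub_eq_sum_range (fun k => (sylvester n - 1) / sylvester k), add_comm]
    exact sylvester.sum_sub_one_div_add_one n
  · have hi : 1 ≤ i ∧ i ≤ n := mem_Icc.mp hi
    exact Nat.div_dvd_of_dvd (sylvester.dvd_sub_one (by omega))

theorem gorenstein_canonical_weights (n : ℕ) (hn : 1 ≤ n) :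
    1 + (∑ i ∈ Finset.Icc 1 n, (sylvester n - 1) / sylvester (n - i)) = sylvester n - 1
    ∧ ∀ i ∈ Finset.Icc 1 n, (sylvester n - 1) / sylvester (n - i) ∣ sylvester n - 1 :=
  gorenstein_canonical_weights_general n
end
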